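/- Let (U, V) be a bivariate Gaussian vector with mean (μ₁, μ₂) and positive correlation structure, and let Y₁ | U ~ Poisson(exp(U)), Y₂ | V ~ Poisson(exp(V)) be conditionally independent. Then Cov(Y₁, Y₂) = exp(μ₁ + σ₁²/2)·exp(μ₂ + σ₂²/2)·(exp(σ₁₂) − 1), where σ₁², σ₂², σ₁₂ are the variances and covariance of (U, V). In particular, the sign of Cov(Y₁, Y₂) equals the sign of σ₁₂. -/

import Mathlib

open scoped Classical
open MeasureTheory Real

/-! Conditioning on `(U, V)` turns the three moments of `(Y₁, Y₂)` into `E[exp U]`, `E[exp V]` and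
`E[exp (U + V)]`, which are values of the moment generating function of `(U, V)` at `(1, 0)`,
`(0, 1)` and `(1, 1)`. The covariance `E[exp (U + V)] - E[exp U] E[exp V]` is then
`E[exp U] E[exp V] (exp σ₁₂ - 1)`, whose sign is that of `σ₁₂`. -/

namespace Real

theorem sign_mul_of_pos {c : ℝ} (hc : 0 < c) (x : ℝ) : sign (c * x) = sign x := by
  rcases lt_trichotomy x 0 with hx | rfl | hx
  · rw [sign_of_neg hx, sign_of_neg (mul_neg_of_pos_of_neg hc hx)]
  · rw [mul_zero]
  · rw [sign_of_pos hx, sign_of_pos (mul_pos hc hx)]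

theorem sign_exp_sub_one (x : ℝ) : sign (exp x - 1) = sign x := by
  rcases lt_trichotomy x 0 with hx | rfl | hx
  · rw [sign_of_neg hx, sign_of_neg (sub_neg.2 (exp_lt_one_iff.2 hx))]
  · rw [exp_zero, sub_self]
  · rw [sign_of_pos hx, sign_of_pos (sub_pos.2 (one_lt_exp_iff.2 hx))]

theorem exp_quadratic_sub_exp_mul_exp (a b s t c : ℝ) :
    exp (a + b + (s + 2 * c + t) / 2) - exp (a + s / 2) * exp (b + t / 2)
      = exp (a + s / 2) * exp (b + t / 2) * (exp c - 1) := by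
  rw [mul_sub, mul_one, ← exp_add, ← exp_add]
  congr 2
  ring

end Real

namespace MeasureTheory

theorem integral_eq_integral_of_condExp_ae_eq {α E : Type*} [NormedAddCommGroup E]
    [NormedSpace ℝ E] [CompleteSpace E] {m m₀ : MeasurableSpace α} {μ : Measure α}
    {f g : α → E} (hm : m ≤ m₀) [SigmaFinite (μ.trim hm)] (h : μ[f | m] =ᵐ[μ] g) :
    ∫ x, f x ∂μ = ∫ x, g x ∂μ := by
  rw [← integral_condExp hm]
  exact integral_congr_ae h

end MeasureTheory

theorem poisson_lognormal_covariance_general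
    {Ω : Type*} [MeasurableSpace Ω] (P : Measure Ω) [IsProbabilityMeasure P]
    (U V : Ω → ℝ) (hU : Measurable U) (hV : Measurable V)
    (Y₁ Y₂ : Ω → ℕ)
    (μ₁ μ₂ σ₁sq σ₂sq σ₁₂ : ℝ)
    (hmgf : ∀ s t : ℝ,
      ∫ ω, Real.exp (s * U ω + t * V ω) ∂P
        = Real.exp (s * μ₁ + t * μ₂
            + (s ^ 2 * σ₁sq + 2 * s * t * σ₁₂ + t ^ 2 * σ₂sq) / 2))
    (hY₁ : P[(fun ω => (Y₁ ω : ℝ)) |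
        MeasurableSpace.comap (fun ω => (U ω, V ω)) inferInstance]
      =ᵐ[P] fun ω => Real.exp (U ω))
    (hY₂ : P[(fun ω => (Y₂ ω : ℝ)) |
        MeasurableSpace.comap (fun ω => (U ω, V ω)) inferInstance]
      =ᵐ[P] fun ω => Real.exp (V ω))
    (hY₁₂ : P[(fun ω => ((Y₁ ω : ℝ) * (Y₂ ω : ℝ))) |
        MeasurableSpace.comap (fun ω => (U ω, V ω)) inferInstance]
      =ᵐ[P] fun ω => Real.exp (U ω + V ω)) :
    (∫ ω, ((Y₁ ω : ℝ) * (Y₂ ω : ℝ)) ∂P)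
        - (∫ ω, (Y₁ ω : ℝ) ∂P) * (∫ ω, (Y₂ ω : ℝ) ∂P)
      = Real.exp (μ₁ + σ₁sq / 2) * Real.exp (μ₂ + σ₂sq / 2) * (Real.exp σ₁₂ - 1)
    ∧ Real.sign ((∫ ω, ((Y₁ ω : ℝ) * (Y₂ ω : ℝ)) ∂P)
        - (∫ ω, (Y₁ ω : ℝ) ∂P) * (∫ ω, (Y₂ ω : ℝ) ∂P)) = Real.sign σ₁₂ := by
  have hle := (hU.prodMk hV).comap_le
  have h₁ : ∫ ω, (Y₁ ω : ℝ) ∂P = exp (μ₁ + σ₁sq / 2) := by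
    rw [integral_eq_integral_of_condExp_ae_eq hle hY₁]
    simpa using hmgf 1 0
  have h₂ : ∫ ω, (Y₂ ω : ℝ) ∂P = exp (μ₂ + σ₂sq / 2) := by
    rw [integral_eq_integral_of_condExp_ae_eq hle hY₂]
    simpa using hmgf 0 1
  have h₁₂ : ∫ ω, (Y₁ ω : ℝ) * Y₂ ω ∂P = exp (μ₁ + μ₂ + (σ₁sq + 2 * σ₁₂ + σ₂sq) / 2) := by
    rw [integral_eq_integral_of_condExp_ae_eq hle hY₁₂]
    simpa using hmgf 1 1
  rw [h₁, h₂, h₁₂, exp_quadratic_sub_exp_mul_exp, sign_mul_of_pos (by positivity), sign_exp_sub_one]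
  exact ⟨rfl, rfl⟩

/-- Covariance in the bivariate Poisson log-normal model: if `(U,V)` is bivariate
Gaussian with means `μ₁, μ₂`, variances `σ₁², σ₂²` and covariance `σ₁₂` (characterized
by its moment generating function), and `Y₁ | U ~ Poisson(exp U)`,
`Y₂ | V ~ Poisson(exp V)` are conditionally independent given `(U,V)` — so that
`E[Y₁ | U,V] = exp U`, `E[Y₂ | U,V] = exp V` and `E[Y₁Y₂ | U,V] = exp(U+V)` — then
`Cov(Y₁,Y₂) = exp(μ₁+σ₁²/2)·exp(μ₂+σ₂²/2)·(exp σ₁₂ − 1)`, whose sign is the sign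
of `σ₁₂`. -/
theorem poisson_lognormal_covariance
    {Ω : Type*} [MeasurableSpace Ω] (P : Measure Ω) [IsProbabilityMeasure P]
    (U V : Ω → ℝ) (hU : Measurable U) (hV : Measurable V)
    (Y₁ Y₂ : Ω → ℕ) (hY₁m : Measurable Y₁) (hY₂m : Measurable Y₂)
    (μ₁ μ₂ σ₁sq σ₂sq σ₁₂ : ℝ)
    (hmgf : ∀ s t : ℝ,
      ∫ ω, Real.exp (s * U ω + t * V ω) ∂P
        = Real.exp (s * μ₁ + t * μ₂
            + (s ^ 2 * σ₁sq + 2 * s * t * σ₁₂ + t ^ 2 * σ₂sq) / 2))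
    (hY₁ : P[(fun ω => (Y₁ ω : ℝ)) |
        MeasurableSpace.comap (fun ω => (U ω, V ω)) inferInstance]
      =ᵐ[P] fun ω => Real.exp (U ω))
    (hY₂ : P[(fun ω => (Y₂ ω : ℝ)) |
        MeasurableSpace.comap (fun ω => (U ω, V ω)) inferInstance]
      =ᵐ[P] fun ω => Real.exp (V ω))
    (hY₁₂ : P[(fun ω => ((Y₁ ω : ℝ) * (Y₂ ω : ℝ))) |
        MeasurableSpace.comap (fun ω => (U ω, V ω)) inferInstance]
      =ᵐ[P] fun ω => Real.exp (U ω + V ω))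
    (hint₁ : Integrable (fun ω => (Y₁ ω : ℝ)) P)
    (hint₂ : Integrable (fun ω => (Y₂ ω : ℝ)) P)
    (hint₁₂ : Integrable (fun ω => ((Y₁ ω : ℝ) * (Y₂ ω : ℝ))) P) :
    (∫ ω, ((Y₁ ω : ℝ) * (Y₂ ω : ℝ)) ∂P)
        - (∫ ω, (Y₁ ω : ℝ) ∂P) * (∫ ω, (Y₂ ω : ℝ) ∂P)
      = Real.exp (μ₁ + σ₁sq / 2) * Real.exp (μ₂ + σ₂sq / 2) * (Real.exp σ₁₂ - 1)
    ∧ Real.sign ((∫ ω, ((Y₁ ω : ℝ) * (Y₂ ω : ℝ)) ∂P)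
        - (∫ ω, (Y₁ ω : ℝ) ∂P) * (∫ ω, (Y₂ ω : ℝ) ∂P)) = Real.sign σ₁₂ :=
  poisson_lognormal_covariance_general P U V hU hV Y₁ Y₂ μ₁ μ₂ σ₁sq σ₂sq σ₁₂ hmgf hY₁ hY₂ hY₁₂
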